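/- Let β₁ > 1, β₂ < 0, r > μ, k > r_e, and J ∈ (0,1). If u > 0 satisfies the three boundary conditions with B₁, B₂ as in the previous lemma and additionally B₁·(Ju)^{β₁} + B₂·(Ju)^{β₂} = 0, then u = c_d·(r−μ)·(β₂·J^{β₁} − β₁·J^{β₂}) / ((k−r_e)·((β₂−1)·J^{β₁} − (β₁−1)·J^{β₂})). -/

import Mathlib

theorem system_threshold_closed_form (β₁ β₂ r μ k r_e c_d u J B₁ B₂ : ℝ)
    (hβ₁ : β₁ > 1) (hβ₂ : β₂ < 0) (hrμ : r > μ) (hk : k > r_e)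
    (hJ : J ∈ Set.Ioo (0:ℝ) 1) (hu : u > 0)
    (hB₁ : B₁ = (β₂ - 1) * (k - r_e) / ((r - μ) * (β₂ - β₁) * u ^ (β₁ - 1))
          - c_d * β₂ / ((β₂ - β₁) * u ^ β₁))
    (hB₂ : B₂ = (β₁ - 1) * (k - r_e) / ((r - μ) * (β₁ - β₂) * u ^ (β₂ - 1))
          - c_d * β₁ / ((β₁ - β₂) * u ^ β₂))
    (hthird : B₁ * (J * u) ^ β₁ + B₂ * (J * u) ^ β₂ = 0) :
    u = c_d * (r - μ) * (β₂ * J ^ β₁ - β₁ * J ^ β₂) /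
          ((k - r_e) * ((β₂ - 1) * J ^ β₁ - (β₁ - 1) * J ^ β₂)) := by
  obtain ⟨hJ0, hJ1⟩ := hJ
  have ha : (0:ℝ) < u ^ β₁ := Real.rpow_pos_of_pos hu _
  have hb : (0:ℝ) < u ^ β₂ := Real.rpow_pos_of_pos hu _
  have hP : (0:ℝ) < J ^ β₁ := Real.rpow_pos_of_pos hJ0 _
  have hQ : (0:ℝ) < J ^ β₂ := Real.rpow_pos_of_pos hJ0 _
  have h1 : u ^ (β₁ - 1) = u ^ β₁ / u := by rw [Real.rpow_sub hu, Real.rpow_one]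
  have h2 : u ^ (β₂ - 1) = u ^ β₂ / u := by rw [Real.rpow_sub hu, Real.rpow_one]
  have h3 : (J*u) ^ β₁ = J ^ β₁ * u ^ β₁ := Real.mul_rpow hJ0.le hu.le
  have h4 : (J*u) ^ β₂ = J ^ β₂ * u ^ β₂ := Real.mul_rpow hJ0.le hu.le
  subst hB₁ hB₂
  rw [h1, h2, h3, h4] at hthird
  have hrμ' : r - μ ≠ 0 := by linarith
  have hβ : β₂ - β₁ ≠ 0 := by linarith
  have hβ' : β₁ - β₂ ≠ 0 := by linarith
  have hD : (β₂ - 1) * J ^ β₁ - (β₁ - 1) * J ^ β₂ ≠ 0 := by nlinarith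
  have hk' : k - r_e ≠ 0 := by linarith
  field_simp at hthird
  rw [eq_div_iff (mul_ne_zero hk' hD)]
  have h5 : (0:ℝ) < β₁ - β₂ := by linarith
  have hC : (0:ℝ) < (r - μ) * (β₁ - β₂) ^ 3 * (u ^ β₁) ^ 2 * (u ^ β₂) ^ 2 :=
    mul_pos (mul_pos (mul_pos (sub_pos.mpr hrμ) (pow_pos h5 3)) (pow_pos ha 2)) (pow_pos hb 2)
  have hE : (β₂ - 1) * (k - r_e) * u * J ^ β₁ - (r - μ) * c_d * β₂ * J ^ β₁
      - (β₁ - 1) * (k - r_e) * u * J ^ β₂ + (r - μ) * c_d * β₁ * J ^ β₂ = 0 :=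
    mul_left_cancel₀ (ne_of_gt hC) (by linear_combination ((r - μ) * (β₁ - β₂) ^ 2 * (u ^ β₁) ^ 2 * (u ^ β₂) ^ 2) * hthird)
  linear_combination hE
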